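/- Let α > 0, c₀ = √(tanh(α)/α), and Ω₁(k) = −αc₀k + ω_α(k) with ω_α(k) = sign(k)·√(αk·tanh(αk)). Then Ω₁ is strictly decreasing on {k : |k| > 1}, i.e., strictly decreasing on (1,∞) and on (−∞,−1). -/

import Mathlib

noncomputable def omegaA (α k : ℝ) : ℝ :=
  Real.sign k * Real.sqrt (α * k * Real.tanh (α * k))

noncomputable def OmegaBr (α : ℝ) (σ : ℝ) (k : ℝ) : ℝ :=
  -α * Real.sqrt (Real.tanh α / α) * k + σ * omegaA α k

/-! For `k > 1` put `x = α k > α`; then `Ω₁(k) = √(x tanh x) - c₀ x`, so it suffices that the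
derivative `(tanh x + x / cosh² x) / (2 √(x tanh x))` of `√(x tanh x)` stays below
`c₀ = √(tanh α / α)`. The inequality `x / cosh² x < tanh x` (that is, `x < sinh x cosh x`) bounds
this derivative by `√(tanh x / x)`, and the same inequality makes `tanh x / x` strictly
decreasing, so `√(tanh x / x) < c₀`. The case `k < -1` follows because `Ω₁` is odd. -/

open Real Set

namespace Real

theorem tanh_pos {x : ℝ} (hx : 0 < x) : 0 < tanh x := by
  rw [tanh_eq_sinh_div_cosh]
  exact div_pos (sinh_pos_iff.2 hx) (cosh_pos x)

theorem hasDerivAt_tanh (x : ℝ) : HasDerivAt tanh (1 / cosh x ^ 2) x := by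
  have h := (hasDerivAt_sinh x).div (hasDerivAt_cosh x) (cosh_pos x).ne'
  rw [show cosh x * cosh x - sinh x * sinh x = 1 by linear_combination cosh_sq_sub_sinh_sq x] at h
  rwa [show sinh / cosh = tanh from funext fun y => (tanh_eq_sinh_div_cosh y).symm] at h

theorem div_cosh_sq_lt_tanh {x : ℝ} (hx : 0 < x) : x / cosh x ^ 2 < tanh x := by
  have hsinh : x < sinh x := self_lt_sinh_iff.2 hx
  have hcosh : 1 ≤ cosh x := one_le_cosh x
  rw [tanh_eq_sinh_div_cosh, div_lt_div_iff₀ (by positivity) (cosh_pos x)]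
  nlinarith [mul_lt_mul_of_pos_right hsinh (cosh_pos x),
    mul_nonneg (mul_nonneg (sinh_pos_iff.2 hx).le (cosh_pos x).le) (sub_nonneg.2 hcosh)]

theorem strictAntiOn_tanh_div_self : StrictAntiOn (fun x => tanh x / x) (Ioi 0) := by
  have hderiv (x : ℝ) (hx : 0 < x) :
      HasDerivAt (fun x => tanh x / x) ((x / cosh x ^ 2 - tanh x) / x ^ 2) x :=
    ((hasDerivAt_tanh x).fun_div (hasDerivAt_id' x) hx.ne').congr_deriv (by ring)
  refine strictAntiOn_of_deriv_neg (convex_Ioi 0)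
    (fun x hx => (hderiv x hx).continuousAt.continuousWithinAt) fun x hx => ?_
  rw [interior_Ioi] at hx
  rw [(hderiv x hx).deriv]
  exact div_neg_of_neg_of_pos (sub_neg.2 (div_cosh_sq_lt_tanh hx)) (pow_pos hx 2)

theorem hasDerivAt_sqrt_mul_tanh {x : ℝ} (hx : 0 < x) :
    HasDerivAt (fun x => √(x * tanh x)) ((tanh x + x / cosh x ^ 2) / (2 * √(x * tanh x))) x :=
  (((hasDerivAt_id' x).fun_mul (hasDerivAt_tanh x)).sqrt
    (mul_pos hx (tanh_pos hx)).ne').congr_deriv (by ring)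

theorem sqrt_mul_tanh_deriv_lt {x : ℝ} (hx : 0 < x) :
    (tanh x + x / cosh x ^ 2) / (2 * √(x * tanh x)) < √(tanh x / x) := by
  have ht : 0 < tanh x := tanh_pos hx
  have hprod : √(tanh x / x) * √(x * tanh x) = tanh x := by
    rw [← sqrt_mul (by positivity), show tanh x / x * (x * tanh x) = tanh x ^ 2 by field_simp,
      sqrt_sq ht.le]
  rw [div_lt_iff₀ (by positivity)]
  linarith [div_cosh_sq_lt_tanh hx]

theorem strictAntiOn_sqrt_mul_tanh_sub {a : ℝ} (ha : 0 < a) :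
    StrictAntiOn (fun x => √(x * tanh x) - √(tanh a / a) * x) (Ici a) := by
  have hderiv (x : ℝ) (hx : a ≤ x) : HasDerivAt (fun x => √(x * tanh x) - √(tanh a / a) * x)
      ((tanh x + x / cosh x ^ 2) / (2 * √(x * tanh x)) - √(tanh a / a) * 1) x :=
    (hasDerivAt_sqrt_mul_tanh (ha.trans_le hx)).sub
      ((hasDerivAt_id x).const_mul √(tanh a / a))
  refine strictAntiOn_of_deriv_neg (convex_Ici a)
    (fun x hx => (hderiv x hx).continuousAt.continuousWithinAt) fun x hx => ?_
  rw [interior_Ici] at hx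
  have hx0 : 0 < x := ha.trans hx
  have hslope : √(tanh x / x) < √(tanh a / a) :=
    sqrt_lt_sqrt (div_pos (tanh_pos hx0) hx0).le (strictAntiOn_tanh_div_self ha hx0 hx)
  rw [(hderiv x hx.le).deriv, mul_one]
  linarith [sqrt_mul_tanh_deriv_lt hx0]

end Real

theorem omegaA_neg (α k : ℝ) : omegaA α (-k) = -omegaA α k := by
  simp only [omegaA, Real.sign_neg, mul_neg, tanh_neg, neg_mul, neg_neg]

theorem OmegaBr_neg (α σ k : ℝ) : OmegaBr α σ (-k) = -OmegaBr α σ k := by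
  simp only [OmegaBr, omegaA_neg]
  ring

theorem OmegaBr_one_of_pos {α k : ℝ} (hk : 0 < k) :
    OmegaBr α 1 k = √(α * k * tanh (α * k)) - √(tanh α / α) * (α * k) := by
  rw [OmegaBr, omegaA, Real.sign_of_pos hk]
  ring

theorem strictAntiOn_OmegaBr_one_Ioi_one {α : ℝ} (hα : 0 < α) :
    StrictAntiOn (OmegaBr α 1) (Ioi 1) := by
  intro k (hk : 1 < k) l (hl : 1 < l) hkl
  rw [OmegaBr_one_of_pos (one_pos.trans hk), OmegaBr_one_of_pos (one_pos.trans hl)]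
  exact strictAntiOn_sqrt_mul_tanh_sub hα (mem_Ici.2 (by nlinarith)) (mem_Ici.2 (by nlinarith))
    (mul_lt_mul_of_pos_left hkl hα)

theorem OmegaPos_strictAntiOn (α : ℝ) (hα : 0 < α) :
    StrictAntiOn (OmegaBr α 1) (Set.Ioi 1) ∧
      StrictAntiOn (OmegaBr α 1) (Set.Iio (-1)) := by
  have hpos := strictAntiOn_OmegaBr_one_Ioi_one hα
  refine ⟨hpos, fun k (hk : k < -1) l (hl : l < -1) hkl => ?_⟩
  have h := hpos (mem_Ioi.2 (lt_neg_of_lt_neg hl)) (mem_Ioi.2 (lt_neg_of_lt_neg hk))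
    (neg_lt_neg hkl)
  rw [OmegaBr_neg, OmegaBr_neg] at h
  linarith
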